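/- For positive definite matrices A, B and t ∈ [0,1], d(A, A ♮_t B) = t·d(A,B) and d(B, A ♮_t B) = (1−t)·d(A,B), where d(X,Y) = 2‖log(X^{-1} # Y)‖ and A ♮_t B = (A^{-1} # B)^t A (A^{-1} # B)^t. -/

import Mathlib

open scoped Matrix.Norms.L2Operator ComplexOrder

variable {n : Type*} [Fintype n] [DecidableEq n]

/-- Real power of a (Hermitian) matrix via the continuous functional calculus. -/
noncomputable def mpow (A : Matrix n n ℂ) (t : ℝ) : Matrix n n ℂ :=
  cfc (fun x : ℝ => x ^ t) A

/-- Matrix logarithm via the continuous functional calculus. -/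
noncomputable def mlog (A : Matrix n n ℂ) : Matrix n n ℂ :=
  cfc Real.log A

/-- The geometric mean `A # B = A^{1/2} (A^{-1/2} B A^{-1/2})^{1/2} A^{1/2}`. -/
noncomputable def geo (A B : Matrix n n ℂ) : Matrix n n ℂ :=
  mpow A (1/2) * mpow (mpow A (-(1/2)) * B * mpow A (-(1/2))) (1/2) * mpow A (1/2)

/-- The weighted geometric mean `A #ₜ B = A^{1/2} (A^{-1/2} B A^{-1/2})^t A^{1/2}`. -/
noncomputable def wgeo (t : ℝ) (A B : Matrix n n ℂ) : Matrix n n ℂ :=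
  mpow A (1/2) * mpow (mpow A (-(1/2)) * B * mpow A (-(1/2))) t * mpow A (1/2)

/-- The weighted spectral geometric mean `A ♮ₜ B = (A⁻¹ # B)^t A (A⁻¹ # B)^t`. -/
noncomputable def sgeo (t : ℝ) (A B : Matrix n n ℂ) : Matrix n n ℂ :=
  mpow (geo A⁻¹ B) t * A * mpow (geo A⁻¹ B) t

/-- Semi-metric `d(A,B) = 2 ‖log (A⁻¹ # B)‖` (operator norm). -/
noncomputable def dsm (A B : Matrix n n ℂ) : ℝ :=
  2 * ‖mlog (geo A⁻¹ B)‖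

/-- Loewner order: `Loewner A B` means `A ≤ B`, i.e. `B - A` is positive semidefinite. -/
def Loewner (A B : Matrix n n ℂ) : Prop := (B - A).PosSemidef

/-!
Write `G = A⁻¹ # B`. The Riccati identity `A⁻¹ # (X A X) = X` for positive definite `X` gives
`d(A, X A X) = 2 ‖log X‖`. Since `G A G = B`, the spectral mean
`A ♮ₜ B = G^t A G^t = G^(t-1) B G^(t-1)` has this shape with respect to both `A` and `B`,
and `log G^s = s log G` yields the factors `|t| = t` and `|t - 1| = 1 - t`.
-/

open Matrix
open scoped MatrixOrder

lemma Matrix.PosDef.pos_of_mem_spectrum {A : Matrix n n ℂ} (hA : A.PosDef) {x : ℝ}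
    (hx : x ∈ spectrum ℝ A) : 0 < x :=
  hA.isStrictlyPositive.spectrum_pos hx

lemma Matrix.PosDef.mul_mul_same {D P : Matrix n n ℂ} (hD : D.PosDef) (hP : P.PosDef) :
    (P * D * P).PosDef := by
  have h := (IsUnit.posDef_star_right_conjugate_iff hP.isUnit).mpr hD
  rwa [star_eq_conjTranspose, hP.isHermitian.eq] at h

lemma posDef_cfc {A : Matrix n n ℂ} (hA : A.PosDef) {f : ℝ → ℝ}
    (hf : ∀ x ∈ spectrum ℝ A, 0 < f x) : (cfc f A).PosDef :=
  ((cfc_isStrictlyPositive_iff f A (A.finite_real_spectrum.continuousOn f)).mpr hf).posDef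

lemma Matrix.PosDef.inv_eq_cfc {A : Matrix n n ℂ} (hA : A.PosDef) :
    A⁻¹ = cfc (fun x : ℝ => x⁻¹) A := by
  rw [cfc_ringInverse_id (R := ℝ) A hA.isUnit, nonsing_inv_eq_ringInverse]

section mpow

variable {A : Matrix n n ℂ}

lemma posDef_mpow (hA : A.PosDef) (t : ℝ) : (mpow A t).PosDef :=
  posDef_cfc hA fun _ hx => Real.rpow_pos_of_pos (hA.pos_of_mem_spectrum hx) t

lemma mpow_zero (hA : A.IsHermitian) : mpow A 0 = 1 := by
  simp [mpow, cfc_const_one ℝ A]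

lemma mpow_one (hA : A.IsHermitian) : mpow A 1 = A := by
  simp [mpow, cfc_id' ℝ A]

lemma mpow_add (hA : A.PosDef) (s r : ℝ) : mpow A (s + r) = mpow A s * mpow A r := by
  have hfin := A.finite_real_spectrum
  rw [mpow, mpow, mpow, ← cfc_mul _ _ A (hfin.continuousOn _) (hfin.continuousOn _)]
  exact cfc_congr fun x hx => Real.rpow_add (hA.pos_of_mem_spectrum hx) s r

lemma mpow_mul (hA : A.PosSemidef) (s r : ℝ) : mpow A (s * r) = mpow (mpow A s) r := by
  have hfin := A.finite_real_spectrum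
  rw [mpow, mpow, mpow, ← cfc_comp' _ _ A ((hfin.image _).continuousOn _) (hfin.continuousOn _)]
  exact cfc_congr fun x hx => Real.rpow_mul (spectrum_nonneg_of_nonneg hA.nonneg hx) s r

lemma inv_mpow (hA : A.PosDef) (t : ℝ) : mpow A⁻¹ t = mpow A (-t) := by
  have hfin := A.finite_real_spectrum
  rw [mpow, hA.inv_eq_cfc, ← cfc_comp' _ _ A ((hfin.image _).continuousOn _) (hfin.continuousOn _)]
  exact cfc_congr fun x hx => by
    rw [Real.inv_rpow (hA.pos_of_mem_spectrum hx).le, Real.rpow_neg (hA.pos_of_mem_spectrum hx).le]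

lemma mlog_mpow (hA : A.PosDef) (t : ℝ) : mlog (mpow A t) = t • mlog A := by
  have hfin := A.finite_real_spectrum
  rw [mlog, mpow, ← cfc_comp' _ _ A ((hfin.image _).continuousOn _) (hfin.continuousOn _),
    mlog, ← cfc_smul t _ A (hfin.continuousOn _)]
  exact cfc_congr fun x hx => Real.log_rpow (hA.pos_of_mem_spectrum hx) t

lemma norm_mlog_mpow (hA : A.PosDef) (t : ℝ) : ‖mlog (mpow A t)‖ = |t| * ‖mlog A‖ := by
  rw [mlog_mpow hA, norm_smul, Real.norm_eq_abs]

lemma mpow_neg_mul_mpow (hA : A.PosDef) (s : ℝ) : mpow A (-s) * mpow A s = 1 := by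
  rw [← mpow_add hA, neg_add_cancel, mpow_zero hA.isHermitian]

lemma mpow_mul_mpow_neg (hA : A.PosDef) (s : ℝ) : mpow A s * mpow A (-s) = 1 := by
  rw [← mpow_add hA, add_neg_cancel, mpow_zero hA.isHermitian]

lemma mpow_half_mul_mpow_half (hA : A.PosDef) : mpow A (1/2) * mpow A (1/2) = A := by
  rw [← mpow_add hA, add_halves, mpow_one hA.isHermitian]

lemma mpow_mul_self_half (hA : A.PosDef) : mpow (A * A) (1/2) = A := by
  calc mpow (A * A) (1/2) = mpow (mpow A (1 + 1)) (1/2) := by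
        rw [mpow_add hA, mpow_one hA.isHermitian]
    _ = mpow A ((1 + 1) * (1/2)) := (mpow_mul hA.posSemidef _ _).symm
    _ = A := by norm_num [mpow_one hA.isHermitian]

end mpow

section geo

variable {A B X : Matrix n n ℂ}

lemma geo_inv_left (hA : A.PosDef) (B : Matrix n n ℂ) :
    geo A⁻¹ B =
      mpow A (-(1/2)) * mpow (mpow A (1/2) * B * mpow A (1/2)) (1/2) * mpow A (-(1/2)) := by
  rw [geo, inv_mpow hA, inv_mpow hA, neg_neg]

lemma posDef_geo_inv_left (hA : A.PosDef) (hB : B.PosDef) : (geo A⁻¹ B).PosDef := by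
  rw [geo_inv_left hA]
  exact (posDef_mpow (hB.mul_mul_same (posDef_mpow hA _)) _).mul_mul_same (posDef_mpow hA _)

/-- The Riccati identity. -/
lemma geo_inv_left_mul_mul_self (hA : A.PosDef) (hX : X.PosDef) : geo A⁻¹ (X * A * X) = X := by
  set H := mpow A (1/2)
  have hHH : H * H = A := mpow_half_mul_mpow_half hA
  have hsq : H * (X * A * X) * H = (H * X * H) * (H * X * H) := by
    rw [← hHH]; noncomm_ring
  rw [geo_inv_left hA, hsq, mpow_mul_self_half (hX.mul_mul_same (posDef_mpow hA _))]
  calc mpow A (-(1/2)) * (H * X * H) * mpow A (-(1/2))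
      = (mpow A (-(1/2)) * H) * X * (H * mpow A (-(1/2))) := by noncomm_ring
    _ = X := by rw [mpow_neg_mul_mpow hA, mpow_mul_mpow_neg hA, one_mul, mul_one]

lemma geo_inv_left_mul_mul_geo_inv_left (hA : A.PosDef) (hB : B.PosDef) :
    geo A⁻¹ B * A * geo A⁻¹ B = B := by
  rw [geo_inv_left hA]
  set H := mpow A (1/2)
  set Hinv := mpow A (-(1/2))
  set S := mpow (H * B * H) (1/2)
  have hHinvH : Hinv * H = 1 := mpow_neg_mul_mpow hA _
  have hHHinv : H * Hinv = 1 := mpow_mul_mpow_neg hA _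
  have hS : S * S = H * B * H := mpow_half_mul_mpow_half (hB.mul_mul_same (posDef_mpow hA _))
  calc Hinv * S * Hinv * A * (Hinv * S * Hinv)
      = Hinv * S * (Hinv * H) * (H * Hinv) * S * Hinv := by
        rw [← mpow_half_mul_mpow_half hA]; noncomm_ring
    _ = Hinv * (S * S) * Hinv := by rw [hHinvH, hHHinv]; noncomm_ring
    _ = (Hinv * H) * B * (H * Hinv) := by rw [hS]; noncomm_ring
    _ = B := by rw [hHinvH, hHHinv, one_mul, mul_one]

lemma mpow_mul_mul_mpow_eq {G : Matrix n n ℂ} (hG : G.PosDef) (A : Matrix n n ℂ) (t : ℝ) :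
    mpow G t * A * mpow G t = mpow G (t - 1) * (G * A * G) * mpow G (t - 1) := by
  have hright : mpow G t = mpow G (t - 1) * G := by
    simpa only [sub_add_cancel, mpow_one hG.isHermitian] using mpow_add hG (t - 1) 1
  have hleft : mpow G t = G * mpow G (t - 1) := by
    simpa only [add_sub_cancel, mpow_one hG.isHermitian] using mpow_add hG 1 (t - 1)
  calc mpow G t * A * mpow G t = mpow G (t - 1) * G * A * (G * mpow G (t - 1)) := by
        rw [← hright, ← hleft]
    _ = mpow G (t - 1) * (G * A * G) * mpow G (t - 1) := by noncomm_ring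

lemma dsm_mul_mul_self (hA : A.PosDef) (hX : X.PosDef) : dsm A (X * A * X) = 2 * ‖mlog X‖ := by
  rw [dsm, geo_inv_left_mul_mul_self hA hX]

lemma sgeo_eq_mpow_sub_one_mul_mul (hA : A.PosDef) (hB : B.PosDef) (t : ℝ) :
    sgeo t A B = mpow (geo A⁻¹ B) (t - 1) * B * mpow (geo A⁻¹ B) (t - 1) := by
  rw [sgeo, mpow_mul_mul_mpow_eq (posDef_geo_inv_left hA hB),
    geo_inv_left_mul_mul_geo_inv_left hA hB]

end geo

/-- `d(A, A ♮ₜ B) = t d(A,B)` and `d(B, A ♮ₜ B) = (1-t) d(A,B)`. -/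
theorem stmt12 (A B : Matrix n n ℂ) (hA : A.PosDef) (hB : B.PosDef)
    {t : ℝ} (ht : t ∈ Set.Icc (0:ℝ) 1) :
    dsm A (sgeo t A B) = t * dsm A B ∧
    dsm B (sgeo t A B) = (1 - t) * dsm A B := by
  obtain ⟨ht0, ht1⟩ := ht
  have hG := posDef_geo_inv_left hA hB
  have hdAB : dsm A B = 2 * ‖mlog (geo A⁻¹ B)‖ := rfl
  constructor
  · rw [sgeo, dsm_mul_mul_self hA (posDef_mpow hG t), norm_mlog_mpow hG, abs_of_nonneg ht0, hdAB]
    ring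
  · rw [sgeo_eq_mpow_sub_one_mul_mul hA hB, dsm_mul_mul_self hB (posDef_mpow hG _),
      norm_mlog_mpow hG, abs_of_nonpos (by linarith), hdAB]
    ring
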